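/- arXiv:2511.03335 — 2 statements merged into one kernel-verified Lean document; each statement's English description precedes it below -/
import Mathlib

section
/- Let 𝒢 be a family of signed graphs. There exists a constant c such that χ_b(G, σ) ≤ c for every (G, σ) ∈ 𝒢 if and only if there exists a constant c' such that χ((G, σ)⁻) ≤ c' for every (G, σ) ∈ 𝒢. -/
open SimpleGraph

namespace SignedGS

variable {V : Type*}

/-- The sign of a walk in a signed graph: the product of the signs of its edges. -/
def walkSign {G : SimpleGraph V} (σ : Sym2 V → ℤˣ) {u v : V} (w : G.Walk u v) : ℤˣ :=
  (w.edges.map σ).prod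

/-- `X` is a balanced set of `(G, σ)`: every cycle of the subgraph induced on `X`
is positive. -/
def IsBalancedSet (G : SimpleGraph V) (σ : Sym2 V → ℤˣ) (X : Set V) : Prop :=
  ∀ ⦃v : V⦄ (w : G.Walk v v), w.IsCycle → (∀ u ∈ w.support, u ∈ X) → walkSign σ w = 1

/-- `(G, σ)` can be covered by `n` balanced sets. -/
def BalancedColorable (G : SimpleGraph V) (σ : Sym2 V → ℤˣ) (n : ℕ) : Prop :=
  ∃ f : V → Fin n, ∀ i : Fin n, IsBalancedSet G σ {v | f v = i}

/-- The balanced chromatic number of `(G, σ)`. -/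
noncomputable def balancedChromNum (G : SimpleGraph V) (σ : Sym2 V → ℤˣ) : ℕ :=
  sInf {n | BalancedColorable G σ n}

/-- The set `X ⊆ V` can be covered by `n` sets each of which is balanced in `(G, σ)`. -/
def BalancedColorableOn (G : SimpleGraph V) (σ : Sym2 V → ℤˣ) (X : Set V) (n : ℕ) : Prop :=
  ∃ f : V → Fin n, ∀ i : Fin n, IsBalancedSet G σ {v | v ∈ X ∧ f v = i}

/-- The balanced chromatic number of the signed subgraph of `(G, σ)` induced on `X`. -/
noncomputable def balancedChromNumOn (G : SimpleGraph V) (σ : Sym2 V → ℤˣ) (X : Set V) : ℕ :=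
  sInf {n | BalancedColorableOn G σ X n}

/-- `(G, σ)⁻` : the spanning subgraph of `G` consisting of the negative edges. -/
def negSubgraph (G : SimpleGraph V) (σ : Sym2 V → ℤˣ) : SimpleGraph V where
  Adj u v := G.Adj u v ∧ σ s(u, v) = -1
  symm := by
    constructor
    intro u v h
    refine ⟨h.1.symm, ?_⟩
    rw [Sym2.eq_swap]
    exact h.2
  loopless := by constructor; intro v h; exact G.loopless.irrefl v h.1

/-- Two signatures on `G` are switching equivalent. -/
def SwitchEquiv (G : SimpleGraph V) (σ σ' : Sym2 V → ℤˣ) : Prop :=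
  ∃ η : V → ℤˣ, ∀ u v : V, G.Adj u v → σ' s(u, v) = η u * σ s(u, v) * η v

/-- Every triangle of `(G, σ)` is positive. -/
def AllTrianglesPositive (G : SimpleGraph V) (σ : Sym2 V → ℤˣ) : Prop :=
  ∀ u v w : V, G.Adj u v → G.Adj v w → G.Adj u w →
    σ s(u, v) * σ s(v, w) * σ s(u, w) = 1

/-- `G` contains an induced copy of `F`. -/
def HasInducedCopy {W : Type*} (F : SimpleGraph W) (G : SimpleGraph V) : Prop :=
  ∃ f : W ↪ V, ∀ a b : W, G.Adj (f a) (f b) ↔ F.Adj a b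

/-- The star `K_{1,m}` with center `0` and `m` leaves. -/
def starGraph (m : ℕ) : SimpleGraph (Fin (m + 1)) where
  Adj a b := (a = 0 ∨ b = 0) ∧ a ≠ b
  symm := by constructor; rintro a b ⟨h1, h2⟩; exact ⟨h1.symm, h2.symm⟩
  loopless := by constructor; rintro a ⟨_, h⟩; exact h rfl

private def disjUnionAdj {W1 W2 : Type*} (F1 : SimpleGraph W1) (F2 : SimpleGraph W2) :
    W1 ⊕ W2 → W1 ⊕ W2 → Prop
  | .inl x, .inl y => F1.Adj x y
  | .inr x, .inr y => F2.Adj x y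
  | _, _ => False

/-- The disjoint union `F1 + F2` of two graphs. -/
def disjUnion {W1 W2 : Type*} (F1 : SimpleGraph W1) (F2 : SimpleGraph W2) :
    SimpleGraph (W1 ⊕ W2) where
  Adj := disjUnionAdj F1 F2
  symm := by
    constructor
    rintro (x | x) (y | y) h
    · exact F1.adj_symm h
    · exact h.elim
    · exact h.elim
    · exact F2.adj_symm h
  loopless := by
    constructor
    rintro (x | x) h
    · exact F1.loopless.irrefl x h
    · exact F2.loopless.irrefl x h

private def fullJoinAdj {W1 W2 : Type*} (G1 : SimpleGraph W1) (G2 : SimpleGraph W2) :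
    W1 ⊕ W2 → W1 ⊕ W2 → Prop
  | .inl x, .inl y => G1.Adj x y
  | .inr x, .inr y => G2.Adj x y
  | _, _ => True

/-- The full join `G1 ⋈ G2` of two vertex-disjoint graphs. -/
def fullJoin {W1 W2 : Type*} (G1 : SimpleGraph W1) (G2 : SimpleGraph W2) :
    SimpleGraph (W1 ⊕ W2) where
  Adj := fullJoinAdj G1 G2
  symm := by
    constructor
    rintro (x | x) (y | y) h
    · exact G1.adj_symm h
    · trivial
    · trivial
    · exact G2.adj_symm h
  loopless := by
    constructor
    rintro (x | x) h
    · exact G1.loopless.irrefl x h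
    · exact G2.loopless.irrefl x h

/-- The linear forest with `l` components, the `i`-th component being a path
on `m i` vertices. -/
def linearForest (l : ℕ) (m : Fin l → ℕ) : SimpleGraph (Σ i : Fin l, Fin (m i)) where
  Adj a b := a.1 = b.1 ∧ ((a.2 : ℕ) + 1 = (b.2 : ℕ) ∨ (b.2 : ℕ) + 1 = (a.2 : ℕ))
  symm := by constructor; rintro a b ⟨h1, h2⟩; exact ⟨h1.symm, h2.symm⟩
  loopless := by constructor; rintro a ⟨_, h⟩; omega

/-- `(G, σ)` has an induced subgraph switching equivalent to the all-negative `K_4`. -/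
def HasSwitchK4Neg (G : SimpleGraph V) (σ : Sym2 V → ℤˣ) : Prop :=
  ∃ f : Fin 4 ↪ V, (∀ a b : Fin 4, a ≠ b → G.Adj (f a) (f b)) ∧
    ∃ η : Fin 4 → ℤˣ, ∀ a b : Fin 4, a ≠ b → η a * σ s(f a, f b) * η b = -1

/-- `(G, σ)` has a triangle all of whose edges are negative. -/
def HasNegTriangle (G : SimpleGraph V) (σ : Sym2 V → ℤˣ) : Prop :=
  ∃ u v w : V, G.Adj u v ∧ G.Adj v w ∧ G.Adj u w ∧
    σ s(u, v) = -1 ∧ σ s(v, w) = -1 ∧ σ s(u, w) = -1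

/-- `(G, σ)` has four vertices inducing a copy of `(K_4, M)`: a complete graph on four
vertices whose negative edges form a perfect matching. -/
def HasK4M (G : SimpleGraph V) (σ : Sym2 V → ℤˣ) : Prop :=
  ∃ a b c d : V, a ≠ b ∧ a ≠ c ∧ a ≠ d ∧ b ≠ c ∧ b ≠ d ∧ c ≠ d ∧
    G.Adj a b ∧ G.Adj a c ∧ G.Adj a d ∧ G.Adj b c ∧ G.Adj b d ∧ G.Adj c d ∧
    σ s(a, b) = -1 ∧ σ s(c, d) = -1 ∧
    σ s(a, c) = 1 ∧ σ s(a, d) = 1 ∧ σ s(b, c) = 1 ∧ σ s(b, d) = 1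

/-- The vertices of the shift graph `S_{k,n}`: strictly increasing `k`-sequences
with values in `{1, …, n}`. -/
def ShiftVertex (k n : ℕ) : Type :=
  {s : Fin k → ℕ // StrictMono s ∧ ∀ i, s i ∈ Finset.Icc 1 n}

/-- `b` is obtained from `a` by shifting: `b = (a_2, …, a_k, t)` for some `t`. -/
def ShiftFollows {k n : ℕ} (a b : ShiftVertex k n) : Prop :=
  ∀ (i : ℕ) (h : i + 1 < k), b.1 ⟨i, Nat.lt_of_succ_lt h⟩ = a.1 ⟨i + 1, h⟩

/-- The shift graph `S_{k,n}`. -/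
def shiftGraph (k n : ℕ) : SimpleGraph (ShiftVertex k n) where
  Adj a b := a ≠ b ∧ (ShiftFollows a b ∨ ShiftFollows b a)
  symm := by constructor; rintro a b ⟨h1, h2⟩; exact ⟨h1.symm, h2.symm⟩
  loopless := by constructor; rintro a ⟨h, _⟩; exact h rfl

/-! The negative edges inside a balanced set form a bipartite graph, since a cycle of negative
edges there is positive and hence even; so `n` balanced sets refine into `2n` independent sets of
`(G, σ)⁻`. Conversely an independent set of `(G, σ)⁻` carries only positive edges, so it is
balanced, and a proper colouring of `(G, σ)⁻` is a cover by balanced sets. -/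

section WalkSign

variable {G : SimpleGraph V} (σ : Sym2 V → ℤˣ)

@[simp]
lemma walkSign_nil {u : V} : walkSign σ (Walk.nil : G.Walk u u) = 1 := rfl

@[simp]
lemma walkSign_cons {u v w : V} (h : G.Adj u v) (p : G.Walk v w) :
    walkSign σ (Walk.cons h p) = σ s(u, v) * walkSign σ p := by
  simp [walkSign]

@[simp]
lemma walkSign_append {u v w : V} (p : G.Walk u v) (q : G.Walk v w) :
    walkSign σ (p.append q) = walkSign σ p * walkSign σ q := by
  simp [walkSign]

lemma walkSign_eq_one_of_forall_mem_edges {u v : V} (p : G.Walk u v)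
    (hp : ∀ e ∈ p.edges, σ e = 1) : walkSign σ p = 1 :=
  List.prod_eq_one fun _ hx ↦ by
    obtain ⟨e, he, rfl⟩ := List.mem_map.mp hx
    exact hp e he

end WalkSign

namespace IsBalancedSet

variable {G : SimpleGraph V} {σ : Sym2 V → ℤˣ} {X : Set V}

lemma walkSign_cons_of_isPath (hX : IsBalancedSet G σ X) {u v : V} (h : G.Adj u v)
    (r : G.Walk v u) (hr : r.IsPath) (hrX : ∀ x ∈ (Walk.cons h r).support, x ∈ X) :
    walkSign σ (Walk.cons h r) = 1 := by
  by_cases hedge : s(v, u) ∈ r.edges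
  · rw [hr.eq_adj_toWalk_of_mem_edges hedge]
    simp [Sym2.eq_swap, Int.units_mul_self]
  · exact hX _ ((Walk.cons_isCycle_iff r h).mpr ⟨hr, by rwa [Sym2.eq_swap]⟩) hrX

/-- Shortcutting a walk inside a balanced set removes only closed subwalks of the form
"edge followed by a path back", each of which is a positive cycle or an edge traversed twice. -/
lemma walkSign_bypass [DecidableEq V] (hX : IsBalancedSet G σ X) {u v : V} (p : G.Walk u v)
    (hpX : ∀ x ∈ p.support, x ∈ X) : walkSign σ p.bypass = walkSign σ p := by
  induction p with
  | nil => rfl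
  | @cons u v w h p ih =>
    rw [Walk.support_cons, List.forall_mem_cons] at hpX
    have hq := p.bypass_isPath
    simp only [Walk.bypass]
    split_ifs with hs
    · have hloop := hX.walkSign_cons_of_isPath h _ (hq.takeUntil hs) <| by
        rw [Walk.support_cons, List.forall_mem_cons]
        exact ⟨hpX.1, fun x hx ↦ hpX.2 x <| p.support_bypass_subset_support <|
          p.bypass.support_takeUntil_subset_support hs hx⟩
      have hsplit := congrArg (walkSign σ) (p.bypass.take_spec hs)
      rw [walkSign_append] at hsplit
      rw [walkSign_cons] at hloop
      rw [walkSign_cons, ← ih hpX.2, ← hsplit, ← mul_assoc, hloop, one_mul]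
    · rw [walkSign_cons, walkSign_cons, ih hpX.2]

lemma walkSign_eq_one {u : V} (hX : IsBalancedSet G σ X) (w : G.Walk u u)
    (hwX : ∀ x ∈ w.support, x ∈ X) : walkSign σ w = 1 := by
  classical
  rw [← hX.walkSign_bypass w hwX, Walk.isPath_iff_nil.mp w.bypass_isPath |>.eq_nil,
    walkSign_nil]

lemma of_forall_not_negAdj
    (hX : ∀ ⦃u v⦄, u ∈ X → v ∈ X → ¬ (negSubgraph G σ).Adj u v) : IsBalancedSet G σ X := by
  intro u w _ hwX
  refine walkSign_eq_one_of_forall_mem_edges σ w fun e he ↦ ?_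
  induction e using Sym2.ind with
  | _ a b =>
    have hab := w.adj_of_mem_edges he
    refine (Int.units_eq_one_or _).resolve_right fun hneg ↦ hX ?_ ?_ ⟨hab, hneg⟩
    · exact hwX a (w.fst_mem_support_of_mem_edges he)
    · exact hwX b (w.snd_mem_support_of_mem_edges he)

def negInduceHom (X : Set V) : (negSubgraph G σ).induce X →g G where
  toFun := Subtype.val
  map_rel' h := h.1

lemma walkSign_map_negInduceHom {u v : X} (p : ((negSubgraph G σ).induce X).Walk u v) :
    walkSign σ (p.map (negInduceHom X)) = (-1) ^ p.length := by
  induction p with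
  | nil => rfl
  | cons h p ih =>
    rw [Walk.map_cons, walkSign_cons, ih, Walk.length_cons, pow_succ']
    exact congrArg (· * _) h.2

lemma negSubgraph_induce_colorable_two (hX : IsBalancedSet G σ X) :
    ((negSubgraph G σ).induce X).Colorable 2 := by
  refine two_colorable_iff_forall_loop_even.mpr fun u w ↦ ?_
  have hsign := hX.walkSign_eq_one (w.map (negInduceHom X)) <| by
    simpa only [Walk.support_map, List.forall_mem_map] using fun x _ ↦ x.2
  rw [walkSign_map_negInduceHom] at hsign
  exact (neg_one_pow_eq_one_iff_even (by decide)).mp hsign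

end IsBalancedSet

variable {G : SimpleGraph V} {σ : Sym2 V → ℤˣ}

lemma BalancedColorable.negSubgraph_colorable {n : ℕ} (h : BalancedColorable G σ n) :
    (negSubgraph G σ).Colorable (n * 2) := by
  classical
  obtain ⟨f, hf⟩ := h
  have c i := ((hf i).negSubgraph_induce_colorable_two).some
  let g (i : Fin n) (v : V) : Fin 2 := if hv : f v = i then c i ⟨v, hv⟩ else 0
  have hg {u v : V} (huv : (negSubgraph G σ).Adj u v) (hfuv : f u = f v) :
      g (f v) u ≠ g (f v) v := by
    have hadj : ((negSubgraph G σ).induce {x | f x = f v}).Adj ⟨u, hfuv⟩ ⟨v, rfl⟩ := huv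
    simpa only [g, dif_pos hfuv, dif_pos rfl] using (c (f v)).valid hadj
  let C : (negSubgraph G σ).Coloring (Fin n × Fin 2) :=
    Coloring.mk (fun v ↦ (f v, g (f v) v)) fun {u v} huv heq ↦ by
      obtain ⟨hfuv, hguv⟩ := Prod.mk.inj heq
      exact hg huv hfuv (by rwa [hfuv] at hguv)
  simpa using C.colorable

lemma balancedColorable_of_colorable {n : ℕ} (h : (negSubgraph G σ).Colorable n) :
    BalancedColorable G σ n :=
  let C := h.some
  ⟨C, fun _ ↦ IsBalancedSet.of_forall_not_negAdj fun _ _ hu hv huv ↦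
    C.valid huv (hu.trans hv.symm)⟩

lemma balancedColorable_balancedChromNum [Fintype V] :
    BalancedColorable G σ (balancedChromNum G σ) :=
  Nat.sInf_mem (s := {n | BalancedColorable G σ n})
    ⟨_, balancedColorable_of_colorable (negSubgraph G σ).colorable_of_fintype⟩

/-- a family of signed graphs has bounded balanced chromatic number iff
the negative subgraphs have bounded chromatic number. -/
theorem stmt3 {ι : Type*} (V : ι → Type*) [∀ i, Fintype (V i)]
    (G : ∀ i, SimpleGraph (V i)) (σ : ∀ i, Sym2 (V i) → ℤˣ) :
    (∃ c : ℕ, ∀ i, balancedChromNum (G i) (σ i) ≤ c) ↔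
      ∃ c' : ℕ, ∀ i, (negSubgraph (G i) (σ i)).chromaticNumber ≤ (c' : ℕ∞) := by
  constructor
  · rintro ⟨c, hc⟩
    refine ⟨c * 2, fun i ↦ ?_⟩
    exact (balancedColorable_balancedChromNum.negSubgraph_colorable.mono
      (Nat.mul_le_mul_right 2 (hc i))).chromaticNumber_le
  · rintro ⟨c', hc'⟩
    refine ⟨c', fun i ↦ Nat.sInf_le ?_⟩
    exact balancedColorable_of_colorable (chromaticNumber_le_iff_colorable.mp (hc' i))

end SignedGS
end

section
/- Let F be a linear forest consisting of l ≥ 1 disjoint paths, each having at most k vertices (k ≥ 2). Then every signed graph (G, σ) in which every triangle is positive (equivalently, with no induced subgraph switching equivalent to the all-negative triangle (K_3, −)) and whose underlying graph contains no induced copy of F satisfies χ_b(G, σ) < 2^k + (l − 1)·k. -/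
/-!
If every triangle of `(G, σ)` is positive, the closed neighbourhood `N[u]` of any vertex is
balanced: switching each neighbour `z` of `u` by `σ(uz)` makes every edge inside `N[u]` positive.

Gyárfás's path argument then covers a set `X` with no induced `P_{n+1}` by `n` balanced sets.
Inside a component of `X`, grow an induced path `c` ending at `u`: one balanced set takes `N[u]`,
and every component of the rest is attached to `N(u)` by an edge `zv`, so that `v` extends `c`;
the path can grow at most `n - 1` times.

For the linear forest, either `X` has no induced copy of its first path `P_{m₀}`, and `k - 1`
balanced sets suffice, or removing the closed neighbourhoods of such a copy costs `m₀ ≤ k`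
balanced sets and leaves no induced copy of the remaining paths. Induction on the number of
paths gives `χ_b ≤ k - 1 + (l - 1) k < 2^k + (l - 1) k`.
-/

open SimpleGraph

namespace SignedGS

variable {V : Type*}

variable {G : SimpleGraph V} {σ : Sym2 V → ℤˣ}

def closedNbhd (G : SimpleGraph V) (u : V) : Set V := insert u (G.neighborSet u)

def ReachableIn (G : SimpleGraph V) (S : Set V) (x y : V) : Prop :=
  ∃ w : G.Walk x y, ∀ z ∈ w.support, z ∈ S

def componentIn (G : SimpleGraph V) (S : Set V) (x : V) : Set V := {y | ReachableIn G S x y}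

def IsIndContainedIn {W : Type*} (F : SimpleGraph W) (G : SimpleGraph V) (X : Set V) : Prop :=
  ∃ f : F ↪g G, ∀ a, f a ∈ X

section Balanced

theorem IsBalancedSet.subset {A B : Set V} (hB : IsBalancedSet G σ B) (h : A ⊆ B) :
    IsBalancedSet G σ A :=
  fun _ w hw hA => hB w hw fun u hu => h (hA u hu)

theorem isBalancedSet_empty : IsBalancedSet G σ ∅ :=
  fun v w _ h => (h v w.start_mem_support).elim

theorem walkSign_eq_of_switching {X : Set V} (η : V → ℤˣ)
    (hη : ∀ x y, G.Adj x y → x ∈ X → y ∈ X → σ s(x, y) = η x * η y) {a b : V}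
    (w : G.Walk a b) (hw : ∀ z ∈ w.support, z ∈ X) : walkSign σ w = η a * η b := by
  induction w with
  | nil => simp [walkSign]
  | @cons a c b h p ih =>
    simp only [Walk.support_cons, List.mem_cons, forall_eq_or_imp] at hw
    have hc := hw.2 c p.start_mem_support
    calc walkSign σ (Walk.cons h p) = σ s(a, c) * walkSign σ p := by simp [walkSign]
      _ = η a * (η c * η c) * η b := by rw [hη a c h hw.1 hc, ih hw.2]; group
      _ = η a * η b := by rw [Int.units_mul_self, mul_one]

theorem isBalancedSet_of_switching {X : Set V} (η : V → ℤˣ)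
    (hη : ∀ x y, G.Adj x y → x ∈ X → y ∈ X → σ s(x, y) = η x * η y) :
    IsBalancedSet G σ X := fun _ w _ hw => by
  rw [walkSign_eq_of_switching η hη w hw, Int.units_mul_self]

theorem isBalancedSet_closedNbhd (h1 : AllTrianglesPositive G σ) (u : V) :
    IsBalancedSet G σ (closedNbhd G u) := by
  classical
  refine isBalancedSet_of_switching (fun z => if z = u then 1 else σ s(u, z)) ?_
  rintro x y hxy (rfl | hx) (rfl | hy)
  · exact (G.loopless.irrefl _ hxy).elim
  · simp [hxy.ne']
  · simp [hxy.ne, Sym2.eq_swap]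
  · have ht := h1 u x y hx hxy hy
    have h := eq_inv_of_mul_eq_one_left ht
    rw [Int.units_inv_eq_self] at h
    simp only [hx.ne', hy.ne', if_false]
    rw [← h, ← mul_assoc, Int.units_mul_self, one_mul]

end Balanced

section Colorable

theorem IsBalancedSet.balancedColorableOn_one {X : Set V} (h : IsBalancedSet G σ X) :
    BalancedColorableOn G σ X 1 :=
  ⟨fun _ => 0, fun _ => h.subset fun _ hv => hv.1⟩

theorem BalancedColorableOn.subset {X Y : Set V} {n : ℕ} (hY : BalancedColorableOn G σ Y n)
    (h : X ⊆ Y) : BalancedColorableOn G σ X n := by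
  obtain ⟨f, hf⟩ := hY
  exact ⟨f, fun i => (hf i).subset fun v hv => ⟨h hv.1, hv.2⟩⟩

theorem BalancedColorableOn.mono {X : Set V} {a b : ℕ} (hX : BalancedColorableOn G σ X a)
    (h : a ≤ b) : BalancedColorableOn G σ X b := by
  obtain ⟨f, hf⟩ := hX
  refine ⟨fun v => Fin.castLE h (f v), fun i => ?_⟩
  by_cases hi : (i : ℕ) < a
  · exact (hf ⟨i, hi⟩).subset fun v hv => ⟨hv.1, Fin.ext (by simp [← hv.2])⟩
  · exact isBalancedSet_empty.subset fun v hv => hi (by simp [← hv.2])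

theorem BalancedColorableOn.union {A B : Set V} {a b : ℕ} (hA : BalancedColorableOn G σ A a)
    (hB : BalancedColorableOn G σ B b) : BalancedColorableOn G σ (A ∪ B) (a + b) := by
  classical
  obtain ⟨f, hf⟩ := hA
  obtain ⟨g, hg⟩ := hB
  refine ⟨fun v => finSumFinEquiv (if v ∈ A then .inl (f v) else .inr (g v)), fun i => ?_⟩
  obtain ⟨j | j, rfl⟩ := finSumFinEquiv.surjective i
  · refine (hf j).subset fun v ⟨_, hv⟩ => ?_
    simp only [EmbeddingLike.apply_eq_iff_eq] at hv
    split_ifs at hv with hvA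
    exact ⟨hvA, Sum.inl_injective hv⟩
  · refine (hg j).subset fun v ⟨hvAB, hv⟩ => ?_
    simp only [EmbeddingLike.apply_eq_iff_eq] at hv
    split_ifs at hv with hvA
    exact ⟨hvAB.resolve_left hvA, Sum.inr_injective hv⟩

theorem balancedColorableOn_iUnion {n : ℕ} [NeZero n] (A : Fin n → Set V)
    (hA : ∀ i, IsBalancedSet G σ (A i)) : BalancedColorableOn G σ (⋃ i, A i) n := by
  classical
  refine ⟨fun v => if h : ∃ i, v ∈ A i then h.choose else 0, fun i => (hA i).subset ?_⟩
  rintro v ⟨hv, rfl⟩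
  obtain ⟨j, hj⟩ := Set.mem_iUnion.1 hv
  have h : ∃ i, v ∈ A i := ⟨j, hj⟩
  simpa [dif_pos h] using h.choose_spec

theorem BalancedColorableOn.balancedColorable {n : ℕ}
    (h : BalancedColorableOn G σ Set.univ n) : BalancedColorable G σ n := by
  obtain ⟨f, hf⟩ := h
  exact ⟨f, fun i => (hf i).subset fun v hv => ⟨trivial, hv⟩⟩

end Colorable

section Components

variable {S T : Set V} {x y z : V}

theorem ReachableIn.refl (hx : x ∈ S) : ReachableIn G S x x :=
  ⟨.nil, by simpa using hx⟩

theorem ReachableIn.symm (h : ReachableIn G S x y) : ReachableIn G S y x := by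
  obtain ⟨w, hw⟩ := h
  exact ⟨w.reverse, fun z hz => hw z (by simpa using hz)⟩

theorem ReachableIn.trans (h : ReachableIn G S x y) (h' : ReachableIn G S y z) :
    ReachableIn G S x z := by
  obtain ⟨w, hw⟩ := h
  obtain ⟨w', hw'⟩ := h'
  exact ⟨w.append w', fun q hq =>
    (Walk.mem_support_append_iff w w').1 hq |>.elim (hw q) (hw' q)⟩

theorem ReachableIn.cons (hxy : G.Adj x y) (hx : x ∈ S) (h : ReachableIn G S y z) :
    ReachableIn G S x z := by
  obtain ⟨w, hw⟩ := h
  exact ⟨.cons hxy w, by simpa [hx] using hw⟩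

theorem ReachableIn.mem_right (h : ReachableIn G S x y) : y ∈ S := by
  obtain ⟨w, hw⟩ := h
  exact hw y w.end_mem_support

theorem reachableIn_of_mem_support {w : G.Walk x y} (hw : ∀ q ∈ w.support, q ∈ S)
    (hz : z ∈ w.support) : ReachableIn G S x z := by
  classical
  exact ⟨w.takeUntil z hz, fun q hq => hw q (w.support_takeUntil_subset_support hz hq)⟩

theorem ReachableIn.exists_adj_mem (h : ReachableIn G S x y) (hx : x ∉ T) (hy : y ∈ T) :
    ∃ z v, ReachableIn G (S \ T) x z ∧ G.Adj z v ∧ v ∈ S ∩ T := by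
  obtain ⟨w, hw⟩ := h
  induction w with
  | nil => exact (hx hy).elim
  | @cons a b c hab p ih =>
    simp only [Walk.support_cons, List.mem_cons, forall_eq_or_imp] at hw
    have ha : a ∈ S \ T := ⟨hw.1, hx⟩
    by_cases hb : b ∈ T
    · exact ⟨a, b, .refl ha, hab, hw.2 b p.start_mem_support, hb⟩
    · obtain ⟨z, v, hz, hzv, hv⟩ := ih hb hy hw.2
      exact ⟨z, v, hz.cons hab ha, hzv, hv⟩

theorem componentIn_subset : componentIn G S x ⊆ S := fun _ h => h.mem_right

theorem componentIn_eq (h : ReachableIn G S x y) : componentIn G S x = componentIn G S y :=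
  Set.ext fun _ => ⟨h.symm.trans, h.trans⟩

theorem ReachableIn.componentIn (h : ReachableIn G S x y) :
    ReachableIn G (componentIn G S x) x y := by
  obtain ⟨w, hw⟩ := h
  exact ⟨w, fun z hz => reachableIn_of_mem_support hw hz⟩

theorem reachableIn_componentIn (hy : y ∈ componentIn G S x) (hz : z ∈ componentIn G S x) :
    ReachableIn G (componentIn G S x) y z :=
  hy.componentIn.symm.trans hz.componentIn

theorem balancedColorableOn_of_componentIn {n : ℕ} (hS : S.Nonempty)
    (h : ∀ x ∈ S, BalancedColorableOn G σ (componentIn G S x) n) :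
    BalancedColorableOn G σ S n := by
  obtain ⟨x₀, hx₀⟩ := hS
  have hK : ∀ K : Set V, ∃ f : V → Fin n, (∃ x ∈ S, componentIn G S x = K) →
      ∀ i, IsBalancedSet G σ {v | v ∈ K ∧ f v = i} := by
    intro K
    by_cases hK : ∃ x ∈ S, componentIn G S x = K
    · obtain ⟨x, hx, rfl⟩ := hK
      obtain ⟨f, hf⟩ := h x hx
      exact ⟨f, fun _ => hf⟩
    · obtain ⟨f, -⟩ := h x₀ hx₀
      exact ⟨f, fun h' => (hK h').elim⟩
  choose F hF using hK
  -- The colouring is chosen per component as a set, so all vertices of a component use the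
  -- same one; a cycle inside `S` lies in a single component.
  refine ⟨fun v => F (componentIn G S v) v, fun i a w hw hsupp => ?_⟩
  have hwS : ∀ z ∈ w.support, z ∈ S := fun z hz => (hsupp z hz).1
  refine hF _ ⟨a, hwS a w.start_mem_support, rfl⟩ i w hw fun z hz => ?_
  have haz := reachableIn_of_mem_support hwS hz
  exact ⟨haz, by simpa [componentIn_eq haz] using (hsupp z hz).2⟩

end Components

section InducedPaths

theorem isIndContainedIn_of_isEmpty {W : Type*} [IsEmpty W] {F : SimpleGraph W} {X : Set V} :
    IsIndContainedIn F G X :=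
  ⟨IsIndContained.of_isEmpty.some, isEmptyElim⟩

theorem IsIndContainedIn.pathGraph_mono {X : Set V} {m n : ℕ}
    (h : IsIndContainedIn (pathGraph n) G X) (hmn : m ≤ n) :
    IsIndContainedIn (pathGraph m) G X := by
  obtain ⟨f, hf⟩ := h
  let e : pathGraph m ↪g pathGraph n := ⟨Fin.castLEEmb hmn, by simp [pathGraph_adj]⟩
  exact ⟨f.comp e, fun a => hf _⟩

def pathSnoc {t : ℕ} (c : pathGraph (t + 1) ↪g G) (v : V)
    (hv : ∀ i, c i ≠ v ∧ (G.Adj (c i) v ↔ i = Fin.last t)) :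
    pathGraph (t + 1 + 1) ↪g G where
  toFun := Fin.lastCases (motive := fun _ => V) v c
  inj' i j h := by
    induction i using Fin.lastCases <;> induction j using Fin.lastCases <;>
      simp_all [(hv _).1, (hv _).1.symm]
  map_rel_iff' {i j} := by
    change G.Adj (Fin.lastCases v c i) (Fin.lastCases v c j) ↔ _
    induction i using Fin.lastCases <;> induction j using Fin.lastCases <;>
      simp [pathGraph_adj, (hv _).2, G.adj_comm v, Fin.ext_iff] <;> omega

@[simp]
theorem pathSnoc_castSucc {t : ℕ} (c : pathGraph (t + 1) ↪g G) (v : V) (hv) (i : Fin (t + 1)) :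
    pathSnoc c v hv i.castSucc = c i :=
  Fin.lastCases_castSucc (motive := fun _ => V) i

@[simp]
theorem pathSnoc_last {t : ℕ} (c : pathGraph (t + 1) ↪g G) (v : V) (hv) :
    pathSnoc c v hv (Fin.last (t + 1)) = v :=
  Fin.lastCases_last (motive := fun _ => V)

theorem IsIndContainedIn.linearForest_succ {l : ℕ} {m : Fin (l + 1) → ℕ} {X : Set V}
    (c : pathGraph (m 0) ↪g G) (hc : ∀ i, c i ∈ X)
    (hF : IsIndContainedIn (linearForest l fun i => m i.succ) G
      (X \ ⋃ i, closedNbhd G (c i))) :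
    IsIndContainedIn (linearForest (l + 1) m) G X := by
  obtain ⟨g, hg⟩ := hF
  have hgc : ∀ a j, c j ≠ g a ∧ ¬ G.Adj (c j) (g a) := fun a j => by
    have := (hg a).2
    simp only [Set.mem_iUnion, closedNbhd, Set.mem_insert_iff, mem_neighborSet, not_exists,
      not_or] at this
    exact ⟨Ne.symm (this j).1, (this j).2⟩
  have hgc' : ∀ a j, ¬ G.Adj (g a) (c j) := fun a j h => (hgc a j).2 h.symm
  let f : (Σ i : Fin (l + 1), Fin (m i)) → V := fun a =>
    Fin.cases (motive := fun i => Fin (m i) → V) c (fun i j => g ⟨i, j⟩) a.1 a.2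
  have hf : ∀ a b, G.Adj (f a) (f b) ↔ (linearForest (l + 1) m).Adj a b := by
    rintro ⟨i, a⟩ ⟨j, b⟩
    cases i using Fin.cases <;> cases j using Fin.cases
    · simp [f, linearForest, pathGraph_adj, c.map_adj_iff]
    · exact iff_of_false (hgc _ _).2 (by simp [linearForest, (Fin.succ_ne_zero _).symm])
    · exact iff_of_false (hgc' _ _) (by simp [linearForest, Fin.succ_ne_zero])
    · exact g.map_adj_iff.trans (by simp [linearForest])
  have hinj : Function.Injective f := by
    rintro ⟨i, a⟩ ⟨j, b⟩ h
    cases i using Fin.cases <;> cases j using Fin.cases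
    · simpa [f] using h
    · exact ((hgc _ _).1 h).elim
    · exact ((hgc _ _).1 h.symm).elim
    · have h' : g ⟨_, a⟩ = g ⟨_, b⟩ := h
      obtain ⟨rfl, hab⟩ := Sigma.mk.inj_iff.1 (g.injective h')
      rw [eq_of_heq hab]
  refine ⟨⟨⟨f, hinj⟩, hf _ _⟩, ?_⟩
  rintro ⟨i, a⟩
  cases i using Fin.cases
  · exact hc a
  · exact (hg _).1

end InducedPaths

section TrianglePositive

variable (h1 : AllTrianglesPositive G σ)
include h1

theorem BalancedColorableOn.of_diff_closedNbhd {S : Set V} {n : ℕ} (u : V)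
    (h : BalancedColorableOn G σ (S \ closedNbhd G u) n) : BalancedColorableOn G σ S (n + 1) :=
  (h.union (isBalancedSet_closedNbhd h1 u).balancedColorableOn_one).subset
    (Set.subset_sdiff_union S _)

theorem BalancedColorableOn.of_diff_iUnion_closedNbhd {S : Set V} {n p : ℕ} [NeZero p]
    (c : Fin p → V) (h : BalancedColorableOn G σ (S \ ⋃ i, closedNbhd G (c i)) n) :
    BalancedColorableOn G σ S (n + p) :=
  (h.union (balancedColorableOn_iUnion _ fun i => isBalancedSet_closedNbhd h1 (c i))).subset
    (Set.subset_sdiff_union S _)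

theorem balancedColorableOn_insert_of_pathGraph {X : Set V} (d : ℕ) :
    ∀ {t : ℕ} (c : pathGraph (t + 1) ↪g G) {C : Set V},
      ¬ IsIndContainedIn (pathGraph (t + 1 + d)) G X → (∀ i, c i ∈ X) → C ⊆ X →
      (∀ y ∈ C, ∀ i, c i ≠ y ∧ (G.Adj (c i) y → i = Fin.last t)) →
      (∀ y ∈ C, ∃ z, ReachableIn G C y z ∧ G.Adj (c (Fin.last t)) z) →
      BalancedColorableOn G σ (insert (c (Fin.last t)) C) d := by
  induction d with
  | zero => exact fun c _ hP hcX => (hP ⟨c, hcX⟩).elim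
  | succ d ih =>
    intro t c C hP hcX hCX hCc hCu
    set u := c (Fin.last t)
    rcases (C \ closedNbhd G u).eq_empty_or_nonempty with hempty | hne
    · refine ((isBalancedSet_closedNbhd h1 u).subset ?_).balancedColorableOn_one.mono (by omega)
      rw [Set.sdiff_eq_empty] at hempty
      exact Set.insert_subset (Set.mem_insert u _) hempty
    have hrest : BalancedColorableOn G σ (C \ closedNbhd G u) d := by
      refine balancedColorableOn_of_componentIn hne fun x hx => ?_
      -- a walk in `C` from `x` to a neighbour of `u` leaves the component of `x` in
      -- `C \ N[u]` through an edge `zv`, and `v` extends the induced path `c`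
      obtain ⟨z₀, hxz₀, huz₀⟩ := hCu x hx.1
      obtain ⟨z, v, hxz, hzv, hvC, hvN⟩ :=
        hxz₀.exists_adj_mem (T := closedNbhd G u) hx.2 (Or.inr huz₀)
      have huv : G.Adj u v := hvN.resolve_left (hCc v hvC (Fin.last t)).1.symm
      let c' := pathSnoc c v fun i =>
        ⟨(hCc v hvC i).1, (hCc v hvC i).2, by rintro rfl; exact huv⟩
      refine (ih c' ?_ ?_ ?_ ?_ ?_).subset (Set.subset_insert _ _)
      · rwa [show t + 1 + 1 + d = t + 1 + (d + 1) by omega]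
      · intro i
        induction i using Fin.lastCases
        · simpa [c'] using hCX hvC
        · simpa [c'] using hcX _
      · exact fun y hy => hCX (componentIn_subset hy).1
      · intro y hy i
        have hy' := componentIn_subset hy
        induction i using Fin.lastCases with
        | last => exact ⟨by simpa [c'] using fun h : v = y => hy'.2 (h ▸ hvN), fun _ => rfl⟩
        | cast i =>
          refine ⟨by simpa [c'] using (hCc y hy'.1 i).1, fun hiy => ?_⟩
          have hi := (hCc y hy'.1 i).2 (by simpa [c'] using hiy)
          subst hi
          exact (hy'.2 (Or.inr (by simpa [c'] using hiy))).elim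
      · exact fun y hy => ⟨z, reachableIn_componentIn hy hxz, by simpa [c'] using hzv.symm⟩
    rw [← Set.insert_sdiff_of_mem C (show u ∈ closedNbhd G u from Set.mem_insert u _)] at hrest
    exact hrest.of_diff_closedNbhd h1 u

theorem balancedColorableOn_of_not_isIndContainedIn_pathGraph {X : Set V} {n p : ℕ} (hn : n ≠ 0)
    (hp : p ≤ n + 1) (hX : ¬ IsIndContainedIn (pathGraph p) G X) :
    BalancedColorableOn G σ X n := by
  rcases X.eq_empty_or_nonempty with rfl | hne
  · exact isBalancedSet_empty.balancedColorableOn_one.mono (by omega)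
  refine balancedColorableOn_of_componentIn hne fun x hx => ?_
  have hxK : x ∈ componentIn G X x := .refl hx
  let c : pathGraph 1 ↪g G :=
    ⟨⟨fun _ => x, fun _ _ _ => Subsingleton.elim (α := Fin 1) _ _⟩, by simp⟩
  have h : BalancedColorableOn G σ (insert x (componentIn G X x \ {x})) n :=
    balancedColorableOn_insert_of_pathGraph h1 n c (C := componentIn G X x \ {x})
    (fun h => hX (h.pathGraph_mono (by omega))) (fun _ => hx)
    (fun y hy => componentIn_subset hy.1)
    (fun y hy i => ⟨fun h => hy.2 h.symm, fun _ => Subsingleton.elim (α := Fin 1) _ _⟩)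
    fun y hy => ?_
  · rwa [Set.insert_sdiff_singleton, Set.insert_eq_of_mem hxK] at h
  obtain ⟨z, v, hyz, hzv, -, rfl⟩ := (reachableIn_componentIn hy.1 hxK).exists_adj_mem hy.2 rfl
  exact ⟨z, hyz, hzv.symm⟩

theorem balancedColorableOn_of_not_isIndContainedIn_linearForest {k : ℕ} (hk : 2 ≤ k)
    (l : ℕ) :
    ∀ (m : Fin (l + 1) → ℕ) {X : Set V}, (∀ i, 1 ≤ m i ∧ m i ≤ k) →
      ¬ IsIndContainedIn (linearForest (l + 1) m) G X →
      BalancedColorableOn G σ X (k - 1 + l * k) := by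
  induction l with
  | zero =>
    intro m X hm hX
    refine (balancedColorableOn_of_not_isIndContainedIn_pathGraph h1 (n := k - 1) (by omega)
      (by have := hm 0; omega) fun ⟨c, hc⟩ =>
        hX (isIndContainedIn_of_isEmpty.linearForest_succ c hc)).mono (by omega)
  | succ l ih =>
    intro m X hm hX
    by_cases hpath : IsIndContainedIn (pathGraph (m 0)) G X
    · obtain ⟨c, hc⟩ := hpath
      have : NeZero (m 0) := ⟨by have := hm 0; omega⟩
      refine ((ih _ (fun i => hm i.succ) fun h => hX (h.linearForest_succ c hc)
        ).of_diff_iUnion_closedNbhd h1 c).mono ?_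
      have := hm 0
      rw [add_mul]
      omega
    · refine (balancedColorableOn_of_not_isIndContainedIn_pathGraph h1 (n := k - 1) (by omega)
        (by have := hm 0; omega) hpath).mono (by omega)

end TrianglePositive

theorem stmt12_general (l k : ℕ) (hl : 1 ≤ l) (hk : 2 ≤ k) (m : Fin l → ℕ)
    (hm : ∀ i, 1 ≤ m i ∧ m i ≤ k)
    {V : Type*} (G : SimpleGraph V) (σ : Sym2 V → ℤˣ)
    (h1 : AllTrianglesPositive G σ)
    (h2 : ¬ HasInducedCopy (linearForest l m) G) :
    balancedChromNum G σ < 2 ^ k + (l - 1) * k := by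
  obtain ⟨l, rfl⟩ : ∃ l', l = l' + 1 := ⟨l - 1, by omega⟩
  have hcol := balancedColorableOn_of_not_isIndContainedIn_linearForest h1 hk l m hm
    (X := Set.univ) fun ⟨f, _⟩ => h2 ⟨f.toEmbedding, fun _ _ => f.map_adj_iff⟩
  calc balancedChromNum G σ ≤ k - 1 + l * k := Nat.sInf_le hcol.balancedColorable
    _ < 2 ^ k + (l + 1 - 1) * k := by
      have := k.lt_two_pow_self
      rw [add_tsub_cancel_right]
      omega

/-- triangle-positive signed graphs with no induced copy of a linear
forest of l paths, each on at most k vertices, have χ_b < 2^k + (l−1)k. -/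
theorem stmt12 (l k : ℕ) (hl : 1 ≤ l) (hk : 2 ≤ k) (m : Fin l → ℕ)
    (hm : ∀ i, 1 ≤ m i ∧ m i ≤ k)
    {V : Type*} [Fintype V] (G : SimpleGraph V) (σ : Sym2 V → ℤˣ)
    (h1 : AllTrianglesPositive G σ)
    (h2 : ¬ HasInducedCopy (linearForest l m) G) :
    balancedChromNum G σ < 2 ^ k + (l - 1) * k :=
  stmt12_general l k hl hk m hm G σ h1 h2

end SignedGS
end
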